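/- arXiv:2010.08025 — 3 statements merged into one kernel-verified Lean document; each statement's English description precedes it below -/
import Mathlib

section
/- If two finite observables A (outcome set Ω_A) and B (outcome set Ω_B) on a finite-dimensional complex Hilbert space H coexist, then A and B are jointly measurable: for every state ρ on H there exists a function μ_ρ : Ω_A × Ω_B → [0,1] with ∑_{(x,y)} μ_ρ(x,y) = 1 such that ∑_{y∈Ω_B} μ_ρ(x,y) = Φ_ρ^A(x) for every x ∈ Ω_A and ∑_{x∈Ω_A} μ_ρ(x,y) = Φ_ρ^B(y) for every y ∈ Ω_B. -/
open Matrix BigOperators Finset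
open scoped ComplexOrder

/-!
Measuring the common refinement `C` in the state `ρ` gives a probability vector
`z ↦ tr(ρ C z)` on `Ω_C`; the joint law of the coarse-grainings `(f, g)` under it is a
distribution on `Ω_A × Ω_B` whose marginals are `tr(ρ A x)` and `tr(ρ B y)`, because
`A x` and `B y` are the sums of `C` over the fibres of `f` and `g`.
-/

namespace Matrix

variable {n : Type*} [Fintype n] [DecidableEq n]

theorem PosSemidef.trace_mul_nonneg {ρ M : Matrix n n ℂ} (hρ : ρ.PosSemidef)
    (hM : M.PosSemidef) : 0 ≤ (ρ * M).trace := by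
  open scoped MatrixOrder Matrix.Norms.L2Operator in
  obtain ⟨S, rfl⟩ := CStarAlgebra.nonneg_iff_eq_star_mul_self.mp hρ.nonneg
  rw [mul_assoc, trace_mul_comm, star_eq_conjTranspose]
  exact (hM.mul_mul_conjTranspose_same S).trace_nonneg

theorem PosSemidef.ofReal_re_trace_mul {ρ M : Matrix n n ℂ} (hρ : ρ.PosSemidef)
    (hM : M.PosSemidef) : (((ρ * M).trace.re : ℝ) : ℂ) = (ρ * M).trace :=
  (Complex.eq_re_of_ofReal_le (Complex.ofReal_zero ▸ hρ.trace_mul_nonneg hM)).symm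

end Matrix

section JointLaw

variable {ι α β : Type*} [Fintype ι] [DecidableEq α] [DecidableEq β]

theorem Finset.sum_univ_sum_filter_prodMk_eq_fst [Fintype β] {M : Type*} [AddCommMonoid M]
    (f : ι → α) (g : ι → β) (t : ι → M) (x : α) :
    ∑ y, ∑ z ∈ univ.filter (fun z => (f z, g z) = (x, y)), t z =
      ∑ z ∈ univ.filter (fun z => f z = x), t z := by
  rw [← sum_fiberwise (univ.filter (fun z => f z = x)) g t]
  simp only [filter_filter, Prod.mk.injEq]

theorem Finset.sum_univ_sum_filter_prodMk_eq_snd [Fintype α] {M : Type*} [AddCommMonoid M]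
    (f : ι → α) (g : ι → β) (t : ι → M) (y : β) :
    ∑ x, ∑ z ∈ univ.filter (fun z => (f z, g z) = (x, y)), t z =
      ∑ z ∈ univ.filter (fun z => g z = y), t z := by
  rw [← sum_fiberwise (univ.filter (fun z => g z = y)) f t]
  simp only [filter_filter, Prod.mk.injEq, and_comm]

theorem exists_joint_law_of_probability_vector [Fintype α] [Fintype β] (t : ι → ℝ)
    (ht0 : ∀ z, 0 ≤ t z) (ht1 : ∑ z, t z = 1) (f : ι → α) (g : ι → β) :
    ∃ μ : α × β → ℝ, (∀ p, 0 ≤ μ p ∧ μ p ≤ 1) ∧ ∑ p, μ p = 1 ∧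
      (∀ x, ∑ y, μ (x, y) = ∑ z ∈ univ.filter (fun z => f z = x), t z) ∧
      (∀ y, ∑ x, μ (x, y) = ∑ z ∈ univ.filter (fun z => g z = y), t z) := by
  set μ : α × β → ℝ := fun p => ∑ z ∈ univ.filter (fun z => (f z, g z) = p), t z
  have hμ0 : ∀ p, 0 ≤ μ p := fun p => sum_nonneg fun z _ => ht0 z
  have hμ1 : ∑ p, μ p = 1 := by rw [sum_fiberwise, ht1]
  refine ⟨μ, fun p => ⟨hμ0 p, ?_⟩, hμ1, sum_univ_sum_filter_prodMk_eq_fst f g t,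
    sum_univ_sum_filter_prodMk_eq_snd f g t⟩
  exact hμ1 ▸ single_le_sum (fun q _ => hμ0 q) (mem_univ p)

end JointLaw

theorem coexist_implies_jointly_measurable_general {d : ℕ} {ΩA ΩB ΩC : Type}
    [Fintype ΩA] [Fintype ΩB] [Fintype ΩC] [DecidableEq ΩA] [DecidableEq ΩB]
    (A : ΩA → Matrix (Fin d) (Fin d) ℂ)
    (B : ΩB → Matrix (Fin d) (Fin d) ℂ)
    (C : ΩC → Matrix (Fin d) (Fin d) ℂ)
    (hCpsd : ∀ z, (C z).PosSemidef) (hCsum : ∑ z, C z = 1)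
    (f : ΩC → ΩA) (g : ΩC → ΩB)
    (hfA : ∀ x, A x = ∑ z ∈ Finset.univ.filter (fun z => f z = x), C z)
    (hgB : ∀ y, B y = ∑ z ∈ Finset.univ.filter (fun z => g z = y), C z) :
    ∀ ρ : Matrix (Fin d) (Fin d) ℂ, ρ.PosSemidef → ρ.trace = 1 →
      ∃ μ : ΩA × ΩB → ℝ,
        (∀ p, 0 ≤ μ p ∧ μ p ≤ 1) ∧
        (∑ p, μ p = 1) ∧
        (∀ x : ΩA, ((∑ y : ΩB, μ (x, y) : ℝ) : ℂ) = (ρ * A x).trace) ∧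
        (∀ y : ΩB, ((∑ x : ΩA, μ (x, y) : ℝ) : ℂ) = (ρ * B y).trace) := by
  intro ρ hρ hρtr
  set t : ΩC → ℝ := fun z => (ρ * C z).trace.re
  have hfibre : ∀ s : Finset ΩC, ((∑ z ∈ s, t z : ℝ) : ℂ) = (ρ * ∑ z ∈ s, C z).trace := by
    intro s
    simp only [t, Complex.ofReal_sum, hρ.ofReal_re_trace_mul (hCpsd _), mul_sum, trace_sum]
  have ht1 : ∑ z, t z = 1 := by
    have h : ((∑ z, t z : ℝ) : ℂ) = 1 := by rw [hfibre, hCsum, mul_one, hρtr]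
    exact_mod_cast h
  obtain ⟨μ, hμ, hμ1, hμA, hμB⟩ := exists_joint_law_of_probability_vector t
    (fun z => by simpa using Complex.re_le_re (hρ.trace_mul_nonneg (hCpsd z))) ht1 f g
  exact ⟨μ, hμ, hμ1, fun x => by rw [hμA, hfibre, hfA], fun y => by rw [hμB, hfibre, hgB]⟩

/-- If two finite observables `A` and `B` coexist (both are parts of a single
observable `C` via surjections `f`, `g`), then they are jointly measurable: for every state `ρ`
there is a joint probability distribution `μ` on `ΩA × ΩB` whose marginals are the
distributions of `A` and of `B` in the state `ρ`. -/
theorem coexist_implies_jointly_measurable {d : ℕ} {ΩA ΩB ΩC : Type}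
    [Fintype ΩA] [Fintype ΩB] [Fintype ΩC] [DecidableEq ΩA] [DecidableEq ΩB]
    (A : ΩA → Matrix (Fin d) (Fin d) ℂ)
    (B : ΩB → Matrix (Fin d) (Fin d) ℂ)
    (C : ΩC → Matrix (Fin d) (Fin d) ℂ)
    (hApsd : ∀ x, (A x).PosSemidef) (hAsum : ∑ x, A x = 1)
    (hBpsd : ∀ y, (B y).PosSemidef) (hBsum : ∑ y, B y = 1)
    (hCpsd : ∀ z, (C z).PosSemidef) (hCsum : ∑ z, C z = 1)
    (f : ΩC → ΩA) (g : ΩC → ΩB)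
    (hf : Function.Surjective f) (hg : Function.Surjective g)
    (hfA : ∀ x, A x = ∑ z ∈ Finset.univ.filter (fun z => f z = x), C z)
    (hgB : ∀ y, B y = ∑ z ∈ Finset.univ.filter (fun z => g z = y), C z) :
    ∀ ρ : Matrix (Fin d) (Fin d) ℂ, ρ.PosSemidef → ρ.trace = 1 →
      ∃ μ : ΩA × ΩB → ℝ,
        (∀ p, 0 ≤ μ p ∧ μ p ≤ 1) ∧
        (∑ p, μ p = 1) ∧
        (∀ x : ΩA, ((∑ y : ΩB, μ (x, y) : ℝ) : ℂ) = (ρ * A x).trace) ∧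
        (∀ y : ΩB, ((∑ x : ΩA, μ (x, y) : ℝ) : ℂ) = (ρ * B y).trace) :=
  coexist_implies_jointly_measurable_general A B C hCpsd hCsum f g hfA hgB
end

section
/- Let A^1,…,A^n be finite observables on a finite-dimensional complex Hilbert space H with nonempty outcome sets Ω_1,…,Ω_n, and let λ_1,…,λ_n ∈ [0,1] with ∑λ_j = 1. Then there exist a finite observable A on H with some finite outcome set Ω_A, and for each j = 1,…,n a surjection f_j : Ω_A → Ω_j and a point x_j ∈ Ω_j, such that f_j(A) = (1−λ_j) I^{x_j} + λ_j A^j, where I^{x_j} is the identity observable on Ω_j concentrated at x_j; i.e. for every x ∈ Ω_j, f_j(A)_x = (1−λ_j)·δ_{x,x_j}·I + λ_j A^j_x. -/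
open Matrix BigOperators Finset
open scoped ComplexOrder

/-!
The joint observable is the convex mixture `λ_k A^k_y` of all the given observables, indexed by
the disjoint union `Σ k, Ω_k`. Marginalising it to `Ω_j` by keeping the outcomes of `A^j` and
sending every outcome of the other observables to a fixed `x_j` yields `λ_j A^j` plus the weight
`∑_{k ≠ j} λ_k = 1 - λ_j` of the other observables, concentrated at `x_j`.
-/

section Collapse

variable {ι : Type*} [DecidableEq ι] {Ω : ι → Type*}

def Sigma.collapse (j : ι) (x₀ : Ω j) (z : Σ k, Ω k) : Ω j :=
  if h : z.1 = j then h ▸ z.2 else x₀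

@[simp]
theorem Sigma.collapse_mk_self (j : ι) (x₀ y : Ω j) : Sigma.collapse j x₀ ⟨j, y⟩ = y := by
  simp [Sigma.collapse]

theorem Sigma.collapse_mk_of_ne {j k : ι} (x₀ : Ω j) (y : Ω k) (hk : k ≠ j) :
    Sigma.collapse j x₀ ⟨k, y⟩ = x₀ :=
  dif_neg hk

theorem Sigma.sum_filter_collapse_eq [Fintype ι] [∀ k, Fintype (Ω k)] {M : Type*}
    [AddCommMonoid M] (B : (Σ k, Ω k) → M) (j : ι) [DecidableEq (Ω j)] (x₀ x : Ω j) :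
    ∑ z ∈ univ.filter (fun z => Sigma.collapse j x₀ z = x), B z
      = B ⟨j, x⟩ + if x = x₀ then ∑ k ∈ {j}ᶜ, ∑ y, B ⟨k, y⟩ else 0 := by
  have h_other : ∀ k ∈ ({j}ᶜ : Finset ι),
      (∑ y, if Sigma.collapse j x₀ ⟨k, y⟩ = x then B ⟨k, y⟩ else 0)
        = if x = x₀ then ∑ y, B ⟨k, y⟩ else 0 := by
    intro k hk
    simp_rw [Sigma.collapse_mk_of_ne x₀ _ (by simpa using hk), eq_comm (a := x₀)]
    split_ifs <;> simp
  rw [sum_filter, ← univ_sigma_univ, sum_sigma, Fintype.sum_eq_add_sum_compl j,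
    sum_congr rfl h_other]
  simp [sum_ite_irrel]

end Collapse

/-- Given finite observables `A^1,…,A^n` with nonempty outcome sets `Ωs j` and
`λ_j ∈ [0,1]` with `∑λ_j = 1`, there exist a finite observable `Aob` (with a finite outcome
set `SA` in some type `ΩA`), surjections `f_j : SA → Ωs j` and points `x_j ∈ Ωs j` such that
`f_j(Aob) = (1−λ_j) I^{x_j} + λ_j A^j`, i.e. for every `x ∈ Ωs j`,
`f_j(Aob)_x = (1−λ_j)·δ_{x,x_j}·I + λ_j A^j_x`. -/
theorem noisy_observables_coexist {d n : ℕ} (Ωs : Fin n → Type)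
    [∀ j, Fintype (Ωs j)] [∀ j, DecidableEq (Ωs j)] [∀ j, Nonempty (Ωs j)]
    (A : ∀ j, Ωs j → Matrix (Fin d) (Fin d) ℂ)
    (hApsd : ∀ j x, (A j x).PosSemidef)
    (hAsum : ∀ j, ∑ x, A j x = 1)
    (lam : Fin n → ℝ)
    (hlam : ∀ j, 0 ≤ lam j ∧ lam j ≤ 1)
    (hlam1 : ∑ j, lam j = 1) :
    ∃ (ΩA : Type) (SA : Finset ΩA) (Aob : ΩA → Matrix (Fin d) (Fin d) ℂ),
      (∀ z ∈ SA, (Aob z).PosSemidef) ∧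
      (∑ z ∈ SA, Aob z = 1) ∧
      ∀ j : Fin n, ∃ (fj : ΩA → Ωs j) (xj : Ωs j),
        (∀ x : Ωs j, ∃ z ∈ SA, fj z = x) ∧
        ∀ x : Ωs j,
          ∑ z ∈ SA.filter (fun z => fj z = x), Aob z
            = ((1 : ℂ) - (lam j : ℂ)) •
                (if x = xj then (1 : Matrix (Fin d) (Fin d) ℂ) else 0)
              + (lam j : ℂ) • A j x := by
  set Aob : (Σ j, Ωs j) → Matrix (Fin d) (Fin d) ℂ := fun z => (lam z.1 : ℂ) • A z.1 z.2
  have h_block : ∀ k, ∑ y, Aob ⟨k, y⟩ = (lam k : ℂ) • 1 := fun k => by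
    rw [← hAsum k, smul_sum]
  have h_total : ∑ k, (lam k : ℂ) = 1 := by exact_mod_cast hlam1
  have h_rest : ∀ j, ∑ k ∈ {j}ᶜ, (lam k : ℂ) = 1 - lam j := fun j => by
    rw [← h_total, ← sum_compl_add_sum {j}, sum_singleton, add_sub_cancel_right]
  refine ⟨_, univ, Aob, fun z _ =>
    (hApsd z.1 z.2).smul (Complex.zero_le_real.mpr (hlam z.1).1), ?_, fun j => ?_⟩
  · rw [← univ_sigma_univ, sum_sigma]
    simp_rw [h_block, ← sum_smul, h_total, one_smul]
  · let xj := Classical.arbitrary (Ωs j)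
    refine ⟨Sigma.collapse j xj, xj, fun x => ⟨⟨j, x⟩, mem_univ _, by simp⟩, fun x => ?_⟩
    rw [Sigma.sum_filter_collapse_eq, sum_congr rfl fun k _ => h_block k, ← sum_smul, h_rest,
      smul_ite, smul_zero, add_comm]
end

section
/- Let A and B be finite observables on a finite-dimensional complex Hilbert space H with outcome sets Ω_A and Ω_B. Then the sequential product L^A∘L^B of the Lüders instruments is itself a Lüders instrument — i.e. there exists a finite observable C on Ω_A × Ω_B with (L^A∘L^B)_{(x,y)}(ρ) = C_{(x,y)}^{1/2} ρ C_{(x,y)}^{1/2} for all ρ and all (x,y) — if and only if A and B commute (A_x B_y = B_y A_x for all x ∈ Ω_A, y ∈ Ω_B), and in that case L^A∘L^B = L^{A∘B}, i.e. B_y^{1/2} A_x^{1/2} ρ A_x^{1/2} B_y^{1/2} = (A_x^{1/2} B_y A_x^{1/2})^{1/2} ρ (A_x^{1/2} B_y A_x^{1/2})^{1/2} for all ρ, x, y. -/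
open Matrix BigOperators Finset
open scoped ComplexOrder

/-- The positive semidefinite square root of a positive semidefinite matrix
(the definition of `Matrix.PosSemidef.sqrt` in Mathlib of December 2024, since removed). -/
noncomputable def Matrix.PosSemidef.sqrt {n : Type*} [Fintype n] [DecidableEq n] {𝕜 : Type*}
    [RCLike 𝕜] {A : Matrix n n 𝕜} (hA : A.PosSemidef) : Matrix n n 𝕜 :=
  hA.1.eigenvectorUnitary.1 * diagonal ((↑) ∘ (√·) ∘ hA.1.eigenvalues) *
  (star hA.1.eigenvectorUnitary : Matrix n n 𝕜)

/-!
If `Q (P ρ P) Q = T ρ T` for all `ρ`, then `QP` and `T` are Kraus operators of the same map,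
so `QP = c T` for a phase `c` (test against the matrix units). Since `tr (QP) ≥ 0` for positive
`P`, `Q` while `tr T > 0`, the phase is `1`; hence `QP = T` is Hermitian, i.e. `QP = PQ`. With
`P = √A_x`, `Q = √B_y` this gives commutation of `A` and `B`. Conversely, if `A_x` and `B_y`
commute, so do their square roots, and `√B_y √A_x` is positive with square `√A_x B_y √A_x`, hence
is its square root.
-/

namespace Matrix

section Phase

variable {m n 𝕜 : Type*} [Fintype n] [RCLike 𝕜]

lemma exists_smul_eq_of_forall_mul_mul_conjTranspose_eq [Fintype m] [DecidableEq n]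
    {S T : Matrix m n 𝕜} (h : ∀ ρ : Matrix n n 𝕜, S * ρ * Sᴴ = T * ρ * Tᴴ) :
    ∃ c : 𝕜, ‖c‖ = 1 ∧ S = c • T := by
  have hentry : ∀ i j k l, S k i * star (S l j) = T k i * star (T l j) := fun i j k l => by
    simpa [mul_apply, single_apply, ite_and, Finset.sum_mul] using
      congrFun (congrFun (h (single i j 1)) k) l
  by_cases hT : T = 0
  · refine ⟨1, norm_one, ?_⟩
    ext k i
    simpa [hT, RCLike.mul_conj] using hentry i i k k
  obtain ⟨k₀, i₀, hT₀⟩ : ∃ k i, T k i ≠ 0 := by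
    by_contra! h0
    exact hT (ext h0)
  have hnorm : ‖S k₀ i₀‖ = ‖T k₀ i₀‖ := by
    have := hentry i₀ i₀ k₀ k₀
    simp only [RCLike.star_def, RCLike.mul_conj] at this
    exact (sq_eq_sq₀ (norm_nonneg _) (norm_nonneg _)).mp (mod_cast this)
  refine ⟨S k₀ i₀ / T k₀ i₀, by rw [norm_div, hnorm, div_self (norm_ne_zero_iff.mpr hT₀)], ?_⟩
  ext k i
  rw [smul_apply, smul_eq_mul, div_mul_eq_mul_div, eq_div_iff hT₀]
  apply mul_right_cancel₀ (star_ne_zero.mpr hT₀)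
  linear_combination S k₀ i₀ * hentry i i₀ k k₀ - S k i * hentry i₀ i₀ k₀ k₀

lemma eq_of_eq_smul_of_trace_nonneg {S T : Matrix n n 𝕜} (hT : T.PosSemidef)
    (hS : 0 ≤ S.trace) {c : 𝕜} (hc : ‖c‖ = 1) (h : S = c • T) : S = T := by
  by_cases hT0 : T = 0
  · simp [h, hT0]
  have htr : T.trace ≠ 0 := (hT.trace_eq_zero_iff.not).mpr hT0
  have hc_nonneg : 0 ≤ c := by
    have hc_eq : c = S.trace / T.trace := by
      rw [h, trace_smul, smul_eq_mul, mul_div_cancel_right₀ _ htr]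
    exact hc_eq ▸ div_nonneg hS hT.trace_nonneg
  rw [h, ← RCLike.norm_of_nonneg' hc_nonneg, hc, RCLike.ofReal_one, one_smul]

end Phase

section Sqrt

open scoped MatrixOrder

variable {n 𝕜 : Type*} [Fintype n] [DecidableEq n] [RCLike 𝕜] {A B : Matrix n n 𝕜}

namespace PosSemidef

lemma sqrt_eq_cfcSqrt (hA : A.PosSemidef) : hA.sqrt = CFC.sqrt A := by
  rw [CFC.sqrt_eq_real_sqrt A hA.nonneg,
    cfcₙ_eq_cfc (hf := Real.continuous_sqrt.continuousOn) (hf0 := Real.sqrt_zero), hA.1.cfc_eq,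
    IsHermitian.cfc, Unitary.conjStarAlgAut_apply]
  rfl

lemma posSemidef_sqrt (hA : A.PosSemidef) : hA.sqrt.PosSemidef := by
  rw [hA.sqrt_eq_cfcSqrt]
  exact (CFC.sqrt_nonneg A).posSemidef

lemma sqrt_mul_self (hA : A.PosSemidef) : hA.sqrt * hA.sqrt = A := by
  rw [hA.sqrt_eq_cfcSqrt]
  exact CFC.sqrt_mul_sqrt_self A hA.nonneg

lemma sqrt_eq_of_mul_self_eq (hA : A.PosSemidef) {S : Matrix n n 𝕜} (hS : S.PosSemidef)
    (h : S * S = A) : hA.sqrt = S := by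
  rw [hA.sqrt_eq_cfcSqrt]
  exact CFC.sqrt_unique h hS.nonneg

lemma commute_sqrt_right (hA : A.PosSemidef) {X : Matrix n n 𝕜} (h : Commute X A) :
    Commute X hA.sqrt := by
  rw [hA.sqrt_eq_cfcSqrt, CFC.sqrt_eq_real_sqrt A hA.nonneg]
  exact (hA.1.isSelfAdjoint.commute_cfcₙ h.symm _).symm

lemma mul_of_commute (hA : A.PosSemidef) (hB : B.PosSemidef) (h : Commute A B) :
    (A * B).PosSemidef :=
  (h.mul_nonneg hA.nonneg hB.nonneg).posSemidef

lemma sqrt_mul_mul_sqrt (hA : A.PosSemidef) (hB : B.PosSemidef) :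
    (hA.sqrt * B * hA.sqrt).PosSemidef := by
  simpa only [hA.posSemidef_sqrt.1.eq] using hB.conjTranspose_mul_mul_same hA.sqrt

lemma sum_sqrt_mul_mul_sqrt {ι : Type*} [Fintype ι] (hA : A.PosSemidef)
    {B : ι → Matrix n n 𝕜} (hB : ∑ i, B i = 1) : ∑ i, hA.sqrt * B i * hA.sqrt = A := by
  rw [← Finset.sum_mul, ← Finset.mul_sum, hB, mul_one, hA.sqrt_mul_self]

lemma trace_mul_nonneg_s18 (hA : A.PosSemidef) (hB : B.PosSemidef) : 0 ≤ (A * B).trace := by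
  rw [← hA.sqrt_mul_self, mul_assoc, trace_mul_comm]
  exact (hA.sqrt_mul_mul_sqrt hB).trace_nonneg

lemma commute_of_commute_sqrt (hA : A.PosSemidef) (hB : B.PosSemidef)
    (h : Commute hA.sqrt hB.sqrt) : Commute A B := by
  rw [← hA.sqrt_mul_self, ← hB.sqrt_mul_self]
  exact (h.mul_left h).mul_right (h.mul_left h)

lemma sqrt_eq_sqrt_mul_sqrt_of_commute (hA : A.PosSemidef) (hB : B.PosSemidef)
    (hAB : Commute A B) (h : (hA.sqrt * B * hA.sqrt).PosSemidef) :
    h.sqrt = hB.sqrt * hA.sqrt := by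
  have hsqrt : Commute hA.sqrt hB.sqrt :=
    hB.commute_sqrt_right (hA.commute_sqrt_right hAB.symm).symm
  refine h.sqrt_eq_of_mul_self_eq
    (hB.posSemidef_sqrt.mul_of_commute hA.posSemidef_sqrt hsqrt.symm) ?_
  calc hB.sqrt * hA.sqrt * (hB.sqrt * hA.sqrt)
      = hA.sqrt * hB.sqrt * (hB.sqrt * hA.sqrt) := by rw [hsqrt.eq]
    _ = hA.sqrt * (hB.sqrt * hB.sqrt) * hA.sqrt := by simp only [mul_assoc]
    _ = hA.sqrt * B * hA.sqrt := by rw [hB.sqrt_mul_self]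

end PosSemidef

lemma commute_of_forall_conj_eq {P Q T : Matrix n n 𝕜} (hP : P.PosSemidef) (hQ : Q.PosSemidef)
    (hT : T.PosSemidef) (h : ∀ ρ, Q * (P * ρ * P) * Q = T * ρ * T) : Commute P Q := by
  have hadj : (Q * P)ᴴ = P * Q := by rw [conjTranspose_mul, hP.1.eq, hQ.1.eq]
  have hconj : ∀ ρ, Q * P * ρ * (Q * P)ᴴ = T * ρ * Tᴴ := fun ρ => by
    rw [hadj, hT.1.eq, ← h]; simp only [mul_assoc]
  obtain ⟨c, hc, hsmul⟩ := exists_smul_eq_of_forall_mul_mul_conjTranspose_eq hconj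
  have hQP : Q * P = T := eq_of_eq_smul_of_trace_nonneg hT (hQ.trace_mul_nonneg_s18 hP) hc hsmul
  show P * Q = Q * P
  rw [← hadj, hQP, hT.1.eq]

end Sqrt

end Matrix

/-- For finite observables `A` and `B`, the sequential product `L^A∘L^B` of the
Lüders instruments is itself a Lüders instrument (i.e. there is a finite observable `C` on
`ΩA × ΩB` with `(L^A∘L^B)_{(x,y)}(ρ) = C_{(x,y)}^{1/2} ρ C_{(x,y)}^{1/2}` for all `ρ, x, y`)
if and only if `A` and `B` commute; and if `A` and `B` commute then `L^A∘L^B = L^{A∘B}`, i.e.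
`B_y^{1/2} A_x^{1/2} ρ A_x^{1/2} B_y^{1/2} = (A_x^{1/2} B_y A_x^{1/2})^{1/2} ρ (A_x^{1/2} B_y A_x^{1/2})^{1/2}`
for all `ρ, x, y` (the square root of `A_x^{1/2} B_y A_x^{1/2}` being taken with respect to
any proof `h` of its positive semidefiniteness). -/
theorem luders_sequential_product_is_luders_iff_commute {d : ℕ} {ΩA ΩB : Type}
    [Fintype ΩA] [Fintype ΩB]
    (A : ΩA → Matrix (Fin d) (Fin d) ℂ)
    (hApsd : ∀ x, (A x).PosSemidef) (hAsum : ∑ x, A x = 1)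
    (B : ΩB → Matrix (Fin d) (Fin d) ℂ)
    (hBpsd : ∀ y, (B y).PosSemidef) (hBsum : ∑ y, B y = 1) :
    ((∃ (C : ΩA × ΩB → Matrix (Fin d) (Fin d) ℂ) (hCpsd : ∀ p, (C p).PosSemidef),
        (∑ p, C p = 1) ∧
        ∀ (x : ΩA) (y : ΩB) (ρ : Matrix (Fin d) (Fin d) ℂ),
          (hBpsd y).sqrt * ((hApsd x).sqrt * ρ * (hApsd x).sqrt) * (hBpsd y).sqrt
            = (hCpsd (x, y)).sqrt * ρ * (hCpsd (x, y)).sqrt)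
      ↔ (∀ (x : ΩA) (y : ΩB), A x * B y = B y * A x)) ∧
    ((∀ (x : ΩA) (y : ΩB), A x * B y = B y * A x) →
      ∀ (x : ΩA) (y : ΩB) (ρ : Matrix (Fin d) (Fin d) ℂ)
        (h : ((hApsd x).sqrt * B y * (hApsd x).sqrt).PosSemidef),
        (hBpsd y).sqrt * ((hApsd x).sqrt * ρ * (hApsd x).sqrt) * (hBpsd y).sqrt
          = h.sqrt * ρ * h.sqrt) := by
  have luders_eq : (∀ x y, A x * B y = B y * A x) → ∀ x y ρ
      (h : ((hApsd x).sqrt * B y * (hApsd x).sqrt).PosSemidef),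
      (hBpsd y).sqrt * ((hApsd x).sqrt * ρ * (hApsd x).sqrt) * (hBpsd y).sqrt
        = h.sqrt * ρ * h.sqrt := by
    intro hAB x y ρ h
    have hsqrt : Commute (hApsd x).sqrt (hBpsd y).sqrt :=
      (hBpsd y).commute_sqrt_right ((hApsd x).commute_sqrt_right (hAB x y).symm).symm
    rw [(hApsd x).sqrt_eq_sqrt_mul_sqrt_of_commute (hBpsd y) (hAB x y) h]
    simp only [mul_assoc, hsqrt.eq]
  refine ⟨⟨?_, fun hAB => ?_⟩, luders_eq⟩
  · rintro ⟨C, hCpsd, -, hluders⟩ x y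
    exact ((hApsd x).commute_of_commute_sqrt (hBpsd y) (commute_of_forall_conj_eq
      (hApsd x).posSemidef_sqrt (hBpsd y).posSemidef_sqrt (hCpsd (x, y)).posSemidef_sqrt
      (hluders x y))).eq
  · have hCpsd (p : ΩA × ΩB) := (hApsd p.1).sqrt_mul_mul_sqrt (hBpsd p.2)
    refine ⟨_, hCpsd, ?_, fun x y ρ => luders_eq hAB x y ρ (hCpsd (x, y))⟩
    simp only [Fintype.sum_prod_type, (hApsd _).sum_sqrt_mul_mul_sqrt hBsum, hAsum]
end
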